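/- Let s, t ∈ ℝ, and let S (resp. T) be the weighted ℓ²(ℤⁿ) space with weight (1+|k|²)^s (resp. (1+|k|²)^t). Suppose u : ℤⁿ → ℂ is such that convolution with u maps S boundedly to T with operator bound C, i.e. ‖u * f‖_{H^t} ≤ C‖f‖_{H^s} for all finitely supported f. Then convolution with u also maps the weighted ℓ² space with weight (1+|k|²)^{-t} boundedly into the one with weight (1+|k|²)^{-s} with the same bound C. -/

import Mathlib

/-!
Duality. Fix a finite set `A` and test the hypothesis on the reflection of
`f = 𝟙_A · β(-·)⁻¹ · conj (u * g)`. Pairing `u * g` with `f` gives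
`P = ∑_{k ∈ A} β(-k)⁻¹ |(u * g)(k)|²`; moving the convolution to the other side turns this pairing
into `∑_m g(m) (u * f(-·))(-m)`, while the weighted norm of `f(-·)` on the right of the hypothesis
is again `P`. Cauchy–Schwarz with the weights `α(-m)^{∓1}` then gives `P² ≤ C² Γ P`, where
`Γ = ∑_m α(-m)⁻¹ |g(m)|²`, so `P ≤ C² Γ`.
-/

open Finset Function ComplexConjugate
open scoped Pointwise

section ENNRealSums

variable {ι : Type*} {φ : ι → ℝ}

lemma tsum_ofReal_le_ofReal_iff (hφ : ∀ i, 0 ≤ φ i) {c : ℝ} (hc : 0 ≤ c) :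
    ∑' i, ENNReal.ofReal (φ i) ≤ ENNReal.ofReal c ↔ ∀ T : Finset ι, ∑ i ∈ T, φ i ≤ c := by
  simp only [ENNReal.tsum_eq_iSup_sum, iSup_le_iff,
    ← ENNReal.ofReal_sum_of_nonneg fun i _ => hφ i, ENNReal.ofReal_le_ofReal_iff hc]

lemma tsum_ofReal_eq_ofReal_sum (hφ : ∀ i, 0 ≤ φ i) {F : Finset ι} (hF : support φ ⊆ F) :
    ∑' i, ENNReal.ofReal (φ i) = ENNReal.ofReal (∑ i ∈ F, φ i) := by
  rw [ENNReal.ofReal_sum_of_nonneg fun i _ => hφ i]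
  exact tsum_eq_sum' (subset_trans (fun i hi => mem_support.mpr fun h => hi (by simp [h])) hF)

end ENNRealSums

variable {G : Type*} [AddCommGroup G]

noncomputable def discreteConv (u f : G → ℂ) (k : G) : ℂ := ∑' l, u l * f (k - l)

lemma discreteConv_eq_sum (u : G → ℂ) {f : G → ℂ} {F : Finset G} (hf : support f ⊆ F) (k : G) :
    discreteConv u f k = ∑ m ∈ F, u (k - m) * f m := by
  rw [discreteConv, ← (Equiv.subLeft k).tsum_eq]
  refine (tsum_eq_sum' (subset_trans (fun m hm => ?_) hf)).trans ?_
  · simp only [mem_support, Equiv.subLeft_apply] at hm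
    simpa using right_ne_zero_of_mul hm
  · simp

lemma discreteConv_neg_reflect (u : G → ℂ) {f : G → ℂ} {F : Finset G} (hf : support f ⊆ F)
    (m : G) :
    discreteConv u (fun j => f (-j)) (-m) = ∑ k ∈ F, u (k - m) * f k := by
  rw [discreteConv, ← (Equiv.subRight m).tsum_eq]
  refine (tsum_eq_sum' (subset_trans (fun k hk => ?_) hf)).trans ?_
  · simp only [mem_support, Equiv.subRight_apply] at hk
    simpa using right_ne_zero_of_mul hk
  · simp

lemma sum_discreteConv_mul_eq (u : G → ℂ) {f g : G → ℂ} {F S : Finset G}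
    (hf : support f ⊆ F) (hg : support g ⊆ S) :
    ∑ k ∈ F, discreteConv u g k * f k = ∑ m ∈ S, g m * discreteConv u (fun j => f (-j)) (-m) := by
  simp_rw [discreteConv_eq_sum u hg, discreteConv_neg_reflect u hf, sum_mul, mul_sum]
  rw [sum_comm]
  exact sum_congr rfl fun _ _ => sum_congr rfl fun _ _ => by ring

section Duality

variable {α β : G → ℝ} {C : ℝ} {u : G → ℂ}

lemma sum_inv_weight_sq_discreteConv_le (hα : ∀ k, 0 < α k)
    (h : ∀ (f : G → ℂ) (F : Finset G), support f ⊆ F → ∀ T : Finset G,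
      ∑ k ∈ T, α k * ‖discreteConv u f k‖ ^ 2 ≤ C ^ 2 * ∑ k ∈ F, β k * ‖f k‖ ^ 2)
    {g : G → ℂ} {S : Finset G} (hg : support g ⊆ S) (A : Finset G) :
    ∑ k ∈ A, (β (-k))⁻¹ * ‖discreteConv u g k‖ ^ 2 ≤
      C ^ 2 * ∑ m ∈ S, (α (-m))⁻¹ * ‖g m‖ ^ 2 := by
  classical
  set c := discreteConv u g
  set P := ∑ k ∈ A, (β (-k))⁻¹ * ‖c k‖ ^ 2
  set Γ := ∑ m ∈ S, (α (-m))⁻¹ * ‖g m‖ ^ 2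
  let f : G → ℂ := fun k => if k ∈ A then ((β (-k))⁻¹ : ℝ) * conj (c k) else 0
  have hf : support f ⊆ A := fun k hk => by
    by_contra hkA
    exact hk (if_neg hkA)
  let y : G → ℂ := fun m => discreteConv u (fun j => f (-j)) (-m)
  have hP_pair : (P : ℂ) = ∑ m ∈ S, g m * y m := by
    rw [← sum_discreteConv_mul_eq u hf hg]
    simp only [P]
    push_cast
    refine Finset.sum_congr rfl fun k hk => ?_
    simp only [f, if_pos hk]
    rw [mul_left_comm, Complex.mul_conj']
    push_cast
    rfl
  have hP_test : ∑ k ∈ A, β (-k) * ‖f k‖ ^ 2 = P := sum_congr rfl fun k hk => by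
    simp only [f, if_pos hk, norm_mul, Complex.norm_real, RCLike.norm_conj, Real.norm_eq_abs,
      mul_pow, sq_abs]
    rcases eq_or_ne (β (-k)) 0 with h0 | h0
    · simp [h0]
    · field_simp
  have hy : ∑ m ∈ S, α (-m) * ‖y m‖ ^ 2 ≤ C ^ 2 * P := by
    have hsupp : support (fun j => f (-j)) ⊆ ((-A : Finset G) : Set G) :=
      fun j hj => mem_neg'.mpr (hf hj)
    simpa [sum_neg_index, hP_test] using h _ _ hsupp (-S)
  have hPle : P ≤ ∑ m ∈ S, ‖g m‖ * ‖y m‖ := calc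
    P ≤ ‖(P : ℂ)‖ := by rw [Complex.norm_real, Real.norm_eq_abs]; exact le_abs_self P
    _ = ‖∑ m ∈ S, g m * y m‖ := by rw [hP_pair]
    _ ≤ ∑ m ∈ S, ‖g m‖ * ‖y m‖ := (norm_sum_le S _).trans_eq (by simp only [norm_mul])
  have hCS : (∑ m ∈ S, ‖g m‖ * ‖y m‖) ^ 2 ≤ Γ * ∑ m ∈ S, α (-m) * ‖y m‖ ^ 2 :=
    sum_sq_le_sum_mul_sum_of_sq_le_mul S
      (fun m _ => by have := hα (-m); positivity) (fun m _ => by have := hα (-m); positivity)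
      fun m _ => by have := (hα (-m)).ne'; field_simp; rfl
  have hΓ : 0 ≤ Γ := sum_nonneg fun m _ => by have := hα (-m); positivity
  rcases le_or_gt P 0 with hP | hP
  · exact hP.trans (by positivity)
  · refine le_of_mul_le_mul_right ?_ hP
    nlinarith [mul_le_mul hPle hPle hP.le (hP.le.trans hPle), mul_le_mul_of_nonneg_left hy hΓ]

theorem discreteConv_dual_bound (hα : ∀ k, 0 < α k) (hβ : ∀ k, 0 ≤ β k)
    (h : ∀ f : G → ℂ, (support f).Finite →
      ∑' k, ENNReal.ofReal (α k * ‖discreteConv u f k‖ ^ 2) ≤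
        ENNReal.ofReal (C ^ 2) * ∑' k, ENNReal.ofReal (β k * ‖f k‖ ^ 2))
    {g : G → ℂ} (hg : (support g).Finite) :
    ∑' k, ENNReal.ofReal ((β (-k))⁻¹ * ‖discreteConv u g k‖ ^ 2) ≤
      ENNReal.ofReal (C ^ 2) * ∑' k, ENNReal.ofReal ((α (-k))⁻¹ * ‖g k‖ ^ 2) := by
  have support_subset (w : G → ℝ) (f : G → ℂ) : support (fun k => w k * ‖f k‖ ^ 2) ⊆ support f :=
    fun k hk => mem_support.mpr fun h0 => hk (by simp [h0])
  have weighted_nonneg {w : G → ℝ} (hw : ∀ k, 0 ≤ w k) (f : G → ℂ) (k : G) :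
      0 ≤ w k * ‖f k‖ ^ 2 :=
    mul_nonneg (hw k) (sq_nonneg _)
  have hα' (k : G) : 0 ≤ α k := (hα k).le
  have hα_inv (k : G) : 0 ≤ (α (-k))⁻¹ := inv_nonneg.mpr (hα' (-k))
  have hβ_inv (k : G) : 0 ≤ (β (-k))⁻¹ := inv_nonneg.mpr (hβ (-k))
  have hfin (f : G → ℂ) (F : Finset G) (hF : support f ⊆ F) (T : Finset G) :
      ∑ k ∈ T, α k * ‖discreteConv u f k‖ ^ 2 ≤ C ^ 2 * ∑ k ∈ F, β k * ‖f k‖ ^ 2 := by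
    have hf := h f (F.finite_toSet.subset hF)
    rw [tsum_ofReal_eq_ofReal_sum (weighted_nonneg hβ f) ((support_subset β f).trans hF),
      ← ENNReal.ofReal_mul (sq_nonneg C)] at hf
    exact (tsum_ofReal_le_ofReal_iff (weighted_nonneg hα' _) (mul_nonneg (sq_nonneg C)
      (sum_nonneg fun k _ => weighted_nonneg hβ f k))).mp hf T
  rw [tsum_ofReal_eq_ofReal_sum (weighted_nonneg hα_inv g)
      ((support_subset _ g).trans hg.coe_toFinset.ge), ← ENNReal.ofReal_mul (sq_nonneg C),
    tsum_ofReal_le_ofReal_iff (weighted_nonneg hβ_inv _) (mul_nonneg (sq_nonneg C)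
      (sum_nonneg fun k _ => weighted_nonneg hα_inv g k))]
  exact sum_inv_weight_sq_discreteConv_le hα hfin hg.coe_toFinset.ge

end Duality

theorem stmt15_general (n : ℕ) (s t : ℝ) (u : (Fin n → ℤ) → ℂ) (C : ℝ)
    (h : ∀ f : (Fin n → ℤ) → ℂ, (Function.support f).Finite →
      ∑' k : Fin n → ℤ, ENNReal.ofReal
          ((1 + ∑ j, ((k j : ℝ)) ^ 2) ^ t * ‖∑' l : Fin n → ℤ, u l * f (k - l)‖ ^ 2) ≤
        ENNReal.ofReal (C ^ 2) *
          ∑' k : Fin n → ℤ, ENNReal.ofReal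
            ((1 + ∑ j, ((k j : ℝ)) ^ 2) ^ s * ‖f k‖ ^ 2)) :
    ∀ g : (Fin n → ℤ) → ℂ, (Function.support g).Finite →
      ∑' k : Fin n → ℤ, ENNReal.ofReal
          ((1 + ∑ j, ((k j : ℝ)) ^ 2) ^ (-s) * ‖∑' l : Fin n → ℤ, u l * g (k - l)‖ ^ 2) ≤
        ENNReal.ofReal (C ^ 2) *
          ∑' k : Fin n → ℤ, ENNReal.ofReal
            ((1 + ∑ j, ((k j : ℝ)) ^ 2) ^ (-t) * ‖g k‖ ^ 2) := by
  intro g hg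
  set w : (Fin n → ℤ) → ℝ := fun k => 1 + ∑ j, ((k j : ℝ)) ^ 2
  have hw_pos : ∀ k, 0 < w k := fun k => by positivity
  have hw_neg : ∀ k, w (-k) = w k := fun k => by simp [w]
  have key := discreteConv_dual_bound (α := fun k => w k ^ t) (β := fun k => w k ^ s)
    (fun k => Real.rpow_pos_of_pos (hw_pos k) t) (fun k => (Real.rpow_pos_of_pos (hw_pos k) s).le)
    h hg
  simp only [hw_neg, ← Real.rpow_neg (hw_pos _).le] at key
  exact key

theorem stmt15 (n : ℕ) (s t : ℝ) (u : (Fin n → ℤ) → ℂ) (C : ℝ) (hC : 0 ≤ C)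
    (h : ∀ f : (Fin n → ℤ) → ℂ, (Function.support f).Finite →
      ∑' k : Fin n → ℤ, ENNReal.ofReal
          ((1 + ∑ j, ((k j : ℝ)) ^ 2) ^ t * ‖∑' l : Fin n → ℤ, u l * f (k - l)‖ ^ 2) ≤
        ENNReal.ofReal (C ^ 2) *
          ∑' k : Fin n → ℤ, ENNReal.ofReal
            ((1 + ∑ j, ((k j : ℝ)) ^ 2) ^ s * ‖f k‖ ^ 2)) :
    ∀ g : (Fin n → ℤ) → ℂ, (Function.support g).Finite →
      ∑' k : Fin n → ℤ, ENNReal.ofReal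
          ((1 + ∑ j, ((k j : ℝ)) ^ 2) ^ (-s) * ‖∑' l : Fin n → ℤ, u l * g (k - l)‖ ^ 2) ≤
        ENNReal.ofReal (C ^ 2) *
          ∑' k : Fin n → ℤ, ENNReal.ofReal
            ((1 + ∑ j, ((k j : ℝ)) ^ 2) ^ (-t) * ‖g k‖ ^ 2) :=
  stmt15_general n s t u C h
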